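/- Let p = v₁…v_k be an interesting path, and for each j let i_j be the number of red vertices on the subpath v₁…v_j. Then f(v₁, i₁) = 0; for every j ∈ {1,…,k−1}, f(v_{j+1}, i_{j+1}) ≤ f(v_j, i_j) + x_{v_j}; and if the weights x satisfy the LP constraint that every interesting path has total non-final weight at least 1, then f(v_k, i_k) ≥ 1. Consequently the interval [0,1] is covered by the union of the intervals [f(v_j, i_j), f(v_j, i_j) + x_{v_j}] for j ∈ {1,…,k−1}, i.e., for every t ∈ [0,1] there exists j ∈ {1,…,k−1} with f(v_j, i_j) ≤ t ≤ f(v_j, i_j) + x_{v_j}. -/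

import Mathlib

open scoped ENNReal

/-- Colors of vertices in the circuit DAG. -/
inductive Color where
  | white | blue | red
deriving DecidableEq

variable {V : Type*}

/-- Number of red vertices on a path (given as a list of vertices). -/
def redCount (color : V → Color) (p : List V) : ℕ :=
  (p.filter (fun v => decide (color v = Color.red))).length

/-- Length of a path: the sum of the weights of its non-final vertices. -/
noncomputable def plen (x : V → ℝ≥0∞) (p : List V) : ℝ≥0∞ :=
  (p.dropLast.map x).sum

/-- `p` is a `(v,i)`-interesting path: it starts at a red vertex, ends at `v`, and
traverses exactly `i` red vertices. -/
def VIPath (E : V → V → Prop) (color : V → Color) (v : V) (i : ℕ) (p : List V) : Prop :=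
  ∃ hp : p ≠ [], p.Chain' E ∧ color (p.head hp) = Color.red ∧
    p.getLast hp = v ∧ redCount color p = i

/-- `p` is an interesting path: it starts and ends at red vertices and traverses exactly
`L+1` red vertices. -/
def IntPath (E : V → V → Prop) (color : V → Color) (L : ℕ) (p : List V) : Prop :=
  ∃ hp : p ≠ [], p.Chain' E ∧ color (p.head hp) = Color.red ∧
    color (p.getLast hp) = Color.red ∧ redCount color p = L + 1

/-- `f_i(v)`: the minimum length of a `(v,i)`-interesting path (`∞` if none exists). -/
noncomputable def fval (E : V → V → Prop) (color : V → Color) (x : V → ℝ≥0∞)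
    (v : V) (i : ℕ) : ℝ≥0∞ :=
  sInf (plen x '' {p : List V | VIPath E color v i p})

/-- `δ(u,w)`: the minimum of `x_u + x_{v₂} + ⋯ + x_{v_{k−1}}` over paths `u v₂ … v_{k−1} w`
whose internal vertices `v₂,…,v_{k−1}` are all blue (`∞` if none exists). -/
noncomputable def deltaW (E : V → V → Prop) (color : V → Color) (x : V → ℝ≥0∞)
    (u w : V) : ℝ≥0∞ :=
  sInf (plen x '' {p : List V | ∃ hp : p ≠ [], p.Chain' E ∧ p.head hp = u ∧
    p.getLast hp = w ∧ 2 ≤ p.length ∧ ∀ z ∈ (p.drop 1).dropLast, color z = Color.blue})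

/-!
Appending the edge `v_j → v_{j+1}` to a shortest `(v_j, i_j)`-interesting path gives the
recurrence `f(v_{j+1}, i_{j+1}) ≤ f(v_j, i_j) + x_{v_j}`, and every `(v_k, L+1)`-interesting path
ending at the red vertex `v_k` is interesting, so the LP constraint gives `f(v_k, i_k) ≥ 1`.
The values `f(v_j, i_j)` thus climb from `0` to at least `1` in steps of at most `x_{v_j}`, and a
discrete intermediate value argument covers `[0, 1]`.
-/

theorem exists_le_and_le_add_of_succ_le_add {α : Type*} [LinearOrder α] [Add α]
    (a d : ℕ → α) (t : α) {n : ℕ} (hn : 0 < n) (h0 : a 0 ≤ t) (htn : t ≤ a n)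
    (hstep : ∀ j < n, a (j + 1) ≤ a j + d j) :
    ∃ j < n, a j ≤ t ∧ t ≤ a j + d j := by
  induction n, hn using Nat.le_induction with
  | base => exact ⟨0, Nat.one_pos, h0, htn.trans (hstep 0 Nat.one_pos)⟩
  | succ n hn ih =>
    rcases le_total (a n) t with hnt | htn'
    · exact ⟨n, n.lt_succ_self, hnt, htn.trans (hstep n n.lt_succ_self)⟩
    · obtain ⟨j, hj, hjt⟩ := ih htn' fun j hj => hstep j (hj.trans n.lt_succ_self)
      exact ⟨j, hj.trans n.lt_succ_self, hjt⟩

variable {E : V → V → Prop} {color : V → Color} {x : V → ℝ≥0∞}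

lemma redCount_append (color : V → Color) (p q : List V) :
    redCount color (p ++ q) = redCount color p + redCount color q := by
  simp [redCount, List.filter_append]

lemma redCount_le_length (color : V → Color) (p : List V) : redCount color p ≤ p.length :=
  List.length_filter_le _ p

lemma redCount_take_succ (color : V → Color) (p : List V) {j : ℕ} (hj : j < p.length) :
    redCount color (p.take (j + 1)) = redCount color (p.take j) + redCount color [p[j]] := by
  rw [List.take_add_one, List.getElem?_eq_getElem hj, redCount_append]
  rfl

lemma plen_concat (x : V → ℝ≥0∞) {q : List V} (hq : q ≠ []) (w : V) :
    plen x (q ++ [w]) = plen x q + x (q.getLast hq) := by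
  unfold plen
  rw [List.dropLast_concat]
  conv_lhs => rw [← List.dropLast_append_getLast hq]
  simp

lemma fval_one_eq_zero {v : V} (hv : color v = Color.red) : fval E color x v 1 = 0 :=
  le_antisymm (sInf_le ⟨[v], ⟨List.cons_ne_nil v [], List.isChain_singleton v, hv, rfl,
    by simp [redCount, hv]⟩, by simp [plen]⟩) zero_le

lemma fval_le_fval_add_of_adj {v w : V} {i : ℕ} (hE : E v w) :
    fval E color x w (i + redCount color [w]) ≤ fval E color x v i + x v := by
  rw [fval, fval, ENNReal.sInf_add]
  refine le_iInf₂ fun _ ⟨q, ⟨hq, hchain, hhead, hlast, hcount⟩, hlen⟩ => ?_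
  have hext : VIPath E color w (i + redCount color [w]) (q ++ [w]) := by
    refine ⟨List.concat_ne_nil w q, ?_, by rwa [List.head_append_left hq], by simp, ?_⟩
    · refine hchain.append (List.isChain_singleton w) fun a ha b hb => ?_
      rw [List.getLast?_eq_some_getLast hq, Option.mem_some_iff] at ha
      rw [List.head?_cons, Option.mem_some_iff] at hb
      rw [← ha, ← hb, hlast]
      exact hE
    · rw [redCount_append, hcount]
  calc sInf (plen x '' {p | VIPath E color w (i + redCount color [w]) p})
      ≤ plen x (q ++ [w]) := sInf_le ⟨q ++ [w], hext, rfl⟩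
    _ = plen x q + x v := by rw [plen_concat x hq, hlast]
    _ = _ := by rw [hlen]

lemma fval_getElem_succ_le {p : List V} (hp : p.IsChain E) (j : ℕ) (hj : j + 1 < p.length) :
    fval E color x p[j + 1] (redCount color (p.take (j + 2))) ≤
      fval E color x p[j] (redCount color (p.take (j + 1))) + x p[j] := by
  rw [redCount_take_succ color p hj]
  exact fval_le_fval_add_of_adj (hp.getElem j hj)

lemma one_le_fval_of_forall_one_le_plen {L : ℕ}
    (hLP : ∀ q : List V, IntPath E color L q → 1 ≤ plen x q) {w : V}
    (hw : color w = Color.red) : 1 ≤ fval E color x w (L + 1) :=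
  le_sInf fun _ ⟨q, ⟨hq, hchain, hhead, hlast, hcount⟩, hlen⟩ =>
    hlen ▸ hLP q ⟨hq, hchain, hhead, hlast ▸ hw, hcount⟩

lemma exists_fval_le_and_le_fval_add {p : List V} (hp : p.IsChain E) (hne : p ≠ [])
    (hlen : 2 ≤ p.length) {t : ℝ≥0∞}
    (hstart : fval E color x (p.head hne) (redCount color (p.take 1)) ≤ t)
    (hend : t ≤ fval E color x (p.getLast hne) (redCount color p)) :
    ∃ (j : ℕ) (hj : j + 1 < p.length),
      fval E color x p[j] (redCount color (p.take (j + 1))) ≤ t ∧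
        t ≤ fval E color x p[j] (redCount color (p.take (j + 1))) + x p[j] := by
  set v : ℕ → V := fun j => p.getD j (p.head hne)
  have hv (j : ℕ) (hj : j < p.length) : v j = p[j] := List.getD_eq_getElem _ _ hj
  obtain ⟨j, hj, hjt⟩ := exists_le_and_le_add_of_succ_le_add
    (fun j => fval E color x (v j) (redCount color (p.take (j + 1)))) (fun j => x (v j)) t
    (n := p.length - 1) (by omega)
    (by rwa [hv 0 (by omega), List.getElem_zero])
    (by rwa [hv _ (by omega), ← List.getLast_eq_getElem hne, Nat.sub_add_cancel (by omega),
      List.take_length])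
    fun j hj => by
      simpa only [hv j (by omega), hv (j + 1) (by omega)] using
        fval_getElem_succ_le hp j (by omega)
  simp only [hv j (by omega)] at hjt
  exact ⟨j, by omega, hjt⟩

-- Indices are 0-based: `v_{j+1}` is `p.get ⟨j, _⟩` and `i_{j+1}` is `redCount color (p.take (j + 1))`.
/-- Lemma 2 of the paper: along an interesting path `p = v₁…v_k`, writing
`i_j` for the number of red vertices on `v₁…v_j`, we have `f(v₁,i₁) = 0`,
`f(v_{j+1},i_{j+1}) ≤ f(v_j,i_j) + x_{v_j}`, and (under the LP constraint) `f(v_k,i_k) ≥ 1`;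
consequently `[0,1]` is covered by the intervals `[f(v_j,i_j), f(v_j,i_j)+x_{v_j}]`,
`j ∈ {1,…,k−1}`. (Indices are 0-based: `v_{j+1} = p.get ⟨j, _⟩`, `i_{j+1} = redCount (p.take (j+1))`.) -/
theorem stmt5 (E : V → V → Prop) (color : V → Color) (L : ℕ) (hL : 1 ≤ L)
    (x : V → ℝ≥0∞)
    (p : List V) (hne : p ≠ []) (hp : IntPath E color L p) :
    fval E color x (p.head hne) (redCount color (p.take 1)) = 0 ∧
    (∀ (j : ℕ) (hj : j + 1 < p.length),
      fval E color x (p.get ⟨j + 1, hj⟩) (redCount color (p.take (j + 2))) ≤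
        fval E color x (p.get ⟨j, by omega⟩) (redCount color (p.take (j + 1))) +
          x (p.get ⟨j, by omega⟩)) ∧
    ((∀ q : List V, IntPath E color L q → 1 ≤ plen x q) →
      1 ≤ fval E color x (p.getLast hne) (redCount color p)) ∧
    ((∀ q : List V, IntPath E color L q → 1 ≤ plen x q) →
      ∀ t : ℝ≥0∞, t ≤ 1 → ∃ (j : ℕ) (hj : j + 1 < p.length),
        fval E color x (p.get ⟨j, by omega⟩) (redCount color (p.take (j + 1))) ≤ t ∧
        t ≤ fval E color x (p.get ⟨j, by omega⟩) (redCount color (p.take (j + 1))) +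
            x (p.get ⟨j, by omega⟩)) := by
  obtain ⟨_, hchain, hhead, hlast, hcount⟩ := hp
  have hfirst : fval E color x (p.head hne) (redCount color (p.take 1)) = 0 := by
    rw [List.take_one, List.head?_eq_some_head hne]
    simpa [redCount, hhead] using fval_one_eq_zero hhead
  have hfinal (hLP : ∀ q : List V, IntPath E color L q → 1 ≤ plen x q) :
      1 ≤ fval E color x (p.getLast hne) (redCount color p) :=
    hcount ▸ one_le_fval_of_forall_one_le_plen hLP hlast
  have hlen : 2 ≤ p.length := hcount ▸ redCount_le_length color p |>.trans' (by omega)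
  exact ⟨hfirst, fval_getElem_succ_le hchain, hfinal, fun hLP t ht =>
    exists_fval_le_and_le_fval_add hchain hne hlen (hfirst ▸ zero_le) (ht.trans (hfinal hLP))⟩
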